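/- One application of the Turing-machine template update exactly simulates one transition step: given a configuration vector encoding tape contents, head position, and state of a deterministic Turing machine M (with at most one block carrying the head), applying the blockwise template-matching function yields the configuration vector encoding the successor configuration of M. -/
import Mathlib


/-! Simulation of a deterministic Turing machine by blockwise template matching. -/

/-- A configuration of a Turing machine on `m` tape cells. -/
structure TMConfig (Q Γ : Type) (m : ℕ) where
  tape : Fin m → Γ
  head : Fin m
  state : Q

/-- One block of the configuration vector: a one-hot symbol part, a head bit, and a
one-hot state part. -/
abbrev TMBlock (Q Γ : Type) := (Γ → Bool) × Bool × (Q → Bool)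

variable {Q Γ : Type} [Fintype Q] [Fintype Γ] [DecidableEq Q] [DecidableEq Γ] {m : ℕ}

/-- One-hot encoding of an element. -/
def oneHot {α : Type} [DecidableEq α] (a : α) : α → Bool := fun x => decide (a = x)

/-- The binary vector encoding of a configuration. -/
def encodeConfig (C : TMConfig Q Γ m) : Fin m → TMBlock Q Γ :=
  fun i => (oneHot (C.tape i), decide (i = C.head),
            fun q => decide (i = C.head) && decide (C.state = q))

/-- The encoding after halting: tape preserved, head (and state) removed. -/
def haltedEncoding (C : TMConfig Q Γ m) : Fin m → TMBlock Q Γ :=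
  fun i => (oneHot (C.tape i), false, fun _ => false)

/-- A vector supported on a single block. -/
noncomputable def singleBlock (i : Fin m) (blk : TMBlock Q Γ) : Fin m → TMBlock Q Γ :=
  fun j => if j = i then blk else ⊥

/-- Template pattern for a non-head block holding symbol `γ`. -/
def nonHeadPat (Q : Type) (γ : Γ) : TMBlock Q Γ := (oneHot γ, false, fun _ => false)

/-- Template pattern for the head block holding symbol `γ` in state `q`. -/
def headPat (q : Q) (γ : Γ) : TMBlock Q Γ := (oneHot γ, true, oneHot q)

/-- The label of the transition (or halting) template for head block `i` with state `q`
and symbol `γ`: write the new symbol, clear the head, and place head and new state in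
the adjacent block as dictated by the move direction (`true` = right). -/
noncomputable def transLabel (δ : Q × Γ → Option (Q × Γ × Bool)) (i : Fin m) (q : Q) (γ : Γ) :
    Fin m → TMBlock Q Γ :=
  match δ (q, γ) with
  | none => singleBlock i (nonHeadPat Q γ)
  | some (q', γ', d) =>
      singleBlock i (nonHeadPat Q γ') ⊔
      (if d then
        (if h : (i : ℕ) + 1 < m then
          singleBlock ⟨(i : ℕ) + 1, h⟩ ((fun _ => false, true, oneHot q') : TMBlock Q Γ)
        else ⊥)
      else
        (if 1 ≤ (i : ℕ) then
          singleBlock ⟨(i : ℕ) - 1, Nat.lt_of_le_of_lt (Nat.sub_le _ _) i.isLt⟩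
            ((fun _ => false, true, oneHot q') : TMBlock Q Γ)
        else ⊥))

/-- The OR of the labels of all templates of block `i` that match the content `blk`. -/
noncomputable def blockOut (δ : Q × Γ → Option (Q × Γ × Bool)) (i : Fin m) (blk : TMBlock Q Γ) :
    Fin m → TMBlock Q Γ :=
  (Finset.univ.sup fun γ : Γ =>
    if blk = nonHeadPat Q γ then singleBlock i (nonHeadPat Q γ) else ⊥) ⊔
  (Finset.univ.sup fun p : Q × Γ =>
    if blk = headPat p.1 p.2 then transLabel δ i p.1 p.2 else ⊥)

/-- The blockwise template-matching update: the coordinatewise OR over all blocks of the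
matched template labels. -/
noncomputable def tmUpdate (δ : Q × Γ → Option (Q × Γ × Bool)) (x : Fin m → TMBlock Q Γ) :
    Fin m → TMBlock Q Γ :=
  Finset.univ.sup fun i => blockOut δ i (x i)

/-- `C'` is the successor configuration of `C` under the transition function `δ`. -/
def IsTMStep (δ : Q × Γ → Option (Q × Γ × Bool)) (C C' : TMConfig Q Γ m) : Prop :=
  ∃ q' γ' d, δ (C.state, C.tape C.head) = some (q', γ', d) ∧
    C'.state = q' ∧
    C'.tape = Function.update C.tape C.head γ' ∧
    ((d = true ∧ (C'.head : ℕ) = (C.head : ℕ) + 1) ∨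
     (d = false ∧ (C.head : ℕ) = (C'.head : ℕ) + 1))

section Aux

lemma sup_single {α β : Type*} [Fintype α] [SemilatticeSup β] [OrderBot β]
    (a : α) (f : α → β) (h2 : ∀ x, x ≠ a → f x = ⊥) : Finset.univ.sup f = f a := by
  refine le_antisymm (Finset.sup_le fun x _ => ?_) (Finset.le_sup (Finset.mem_univ a))
  by_cases hx : x = a
  · subst hx; exact le_rfl
  · rw [h2 x hx]; exact bot_le

lemma oneHot_inj {α : Type} [DecidableEq α] {a b : α} (h : oneHot a = oneHot b) : a = b := by
  have := congrFun h a
  simpa [oneHot, eq_comm] using this.symm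

lemma singleBlock_apply (i j : Fin m) (blk : TMBlock Q Γ) :
    singleBlock i blk j = if j = i then blk else ⊥ := rfl

lemma sup_singleBlock (g : Fin m → TMBlock Q Γ) :
    (Finset.univ.sup fun i => singleBlock i (g i)) = g := by
  funext j
  rw [Finset.sup_apply]
  have : (Finset.univ.sup fun i => singleBlock i (g i) j) = singleBlock j (g j) j :=
    sup_single j _ (fun x hx => by simp [singleBlock_apply, Ne.symm hx])
  rw [this, singleBlock_apply, if_pos rfl]

lemma encode_nonHead (C : TMConfig Q Γ m) {i : Fin m} (hi : i ≠ C.head) :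
    encodeConfig C i = nonHeadPat Q (C.tape i) := by
  simp [encodeConfig, nonHeadPat, hi]

lemma encode_head (C : TMConfig Q Γ m) :
    encodeConfig C C.head = headPat C.state (C.tape C.head) := by
  simp [encodeConfig, headPat, oneHot]
  rfl

lemma blockOut_nonHead (δ : Q × Γ → Option (Q × Γ × Bool)) (i : Fin m) (γ : Γ) :
    blockOut δ i (nonHeadPat Q γ) = singleBlock i (nonHeadPat Q γ) := by
  unfold blockOut
  have h1 : (Finset.univ.sup fun γ' : Γ =>
      if nonHeadPat Q γ = nonHeadPat Q γ' then singleBlock i (nonHeadPat Q γ') else ⊥)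
      = singleBlock i (nonHeadPat Q γ) := by
    have := sup_single (β := Fin m → TMBlock Q Γ) γ
      (fun γ' : Γ => if nonHeadPat Q γ = nonHeadPat Q γ' then singleBlock i (nonHeadPat Q γ') else ⊥)
      (fun x hx => if_neg fun hc => hx (oneHot_inj (congrArg Prod.fst hc)).symm)
    rw [this]
    exact if_pos rfl
  have h2 : (Finset.univ.sup fun p : Q × Γ =>
      if nonHeadPat Q γ = headPat p.1 p.2 then transLabel δ i p.1 p.2 else ⊥) = ⊥ := by
    rw [Finset.sup_eq_bot_iff]
    intro p _
    refine if_neg fun hc => ?_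
    have := congrArg (Prod.fst ∘ Prod.snd) hc
    simp [nonHeadPat, headPat] at this
  rw [h1, h2, sup_bot_eq]

lemma blockOut_head (δ : Q × Γ → Option (Q × Γ × Bool)) (i : Fin m) (q : Q) (γ : Γ) :
    blockOut δ i (headPat q γ) = transLabel δ i q γ := by
  unfold blockOut
  have h1 : (Finset.univ.sup fun γ' : Γ =>
      if headPat q γ = nonHeadPat Q γ' then singleBlock i (nonHeadPat Q γ') else ⊥) = ⊥ := by
    rw [Finset.sup_eq_bot_iff]
    intro γ' _
    refine if_neg fun hc => ?_
    have := congrArg (Prod.fst ∘ Prod.snd) hc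
    simp [nonHeadPat, headPat] at this
  have h2 : (Finset.univ.sup fun p : Q × Γ =>
      if headPat q γ = headPat p.1 p.2 then transLabel δ i p.1 p.2 else ⊥)
      = transLabel δ i q γ := by
    have := sup_single (β := Fin m → TMBlock Q Γ) ((q, γ) : Q × Γ)
      (fun p : Q × Γ => if headPat q γ = headPat p.1 p.2 then transLabel δ i p.1 p.2 else ⊥)
      (fun x hx => if_neg fun hc => hx
        (Prod.ext (oneHot_inj (congrArg (fun b => b.2.2) hc)).symm
          (oneHot_inj (congrArg (fun b => b.1) hc)).symm))
    rw [this]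
    exact if_pos rfl
  rw [h1, h2, bot_sup_eq]

end Aux

/-- One application of the Turing-machine template update exactly simulates one transition
step of the machine: it maps the encoding of a configuration to the encoding of its
successor configuration, and to the halted encoding if `δ` is undefined. -/
theorem tm_template_step (δ : Q × Γ → Option (Q × Γ × Bool)) (C : TMConfig Q Γ m) :
    (∀ C' : TMConfig Q Γ m, IsTMStep δ C C' →
      tmUpdate δ (encodeConfig C) = encodeConfig C') ∧
    (δ (C.state, C.tape C.head) = none →
      tmUpdate δ (encodeConfig C) = haltedEncoding C) := by
  constructor
  · rintro C' ⟨q', γ', d, hδ, hstate, htape, hd⟩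
    -- the transition label at the head block
    have hb : transLabel δ C.head C.state (C.tape C.head) =
        singleBlock C.head (nonHeadPat Q γ') ⊔
          singleBlock C'.head ((fun _ => false, true, oneHot q') : TMBlock Q Γ) := by
      unfold transLabel
      rw [hδ]
      rcases hd with ⟨hdt, hpos⟩ | ⟨hdf, hpos⟩
      · subst hdt
        have hlt : (C.head : ℕ) + 1 < m := hpos ▸ C'.head.isLt
        have heq : (⟨(C.head : ℕ) + 1, hlt⟩ : Fin m) = C'.head := by
          apply Fin.ext; simp [hpos]
        simp [heq, hlt]
      · subst hdf
        have hle : 1 ≤ (C.head : ℕ) := by omega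
        have heq : (⟨(C.head : ℕ) - 1, Nat.lt_of_le_of_lt (Nat.sub_le _ _) C.head.isLt⟩ : Fin m)
            = C'.head := by
          apply Fin.ext; simp; omega
        simp [hle, heq]
    have hfun : (fun i => blockOut δ i (encodeConfig C i)) =
        (fun i => singleBlock i (nonHeadPat Q (C'.tape i))) ⊔
        (fun i => if i = C.head then
          singleBlock C'.head ((fun _ => false, true, oneHot q') : TMBlock Q Γ) else ⊥) := by
      funext i
      by_cases hi : i = C.head
      · subst hi
        rw [encode_head, blockOut_head, hb]
        have : C'.tape C.head = γ' := by rw [htape, Function.update_self]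
        simp [Pi.sup_apply, this]
      · rw [encode_nonHead C hi, blockOut_nonHead]
        have : C'.tape i = C.tape i := by rw [htape, Function.update_of_ne hi]
        simp [Pi.sup_apply, hi, this]
    unfold tmUpdate
    rw [hfun, Finset.sup_sup, sup_singleBlock,
      sup_single (C.head) _ (fun x hx => if_neg hx), if_pos rfl]
    funext j
    have hne : C'.head ≠ C.head := by
      rcases hd with ⟨_, hpos⟩ | ⟨_, hpos⟩ <;> (intro hc; rw [hc] at hpos; omega)
    by_cases hj : j = C'.head
    · subst hj
      simp only [Pi.sup_apply, singleBlock_apply, if_pos rfl]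
      refine Prod.ext ?_ (Prod.ext ?_ ?_)
      · show oneHot (C'.tape C'.head) ⊔ (fun _ => false) = oneHot (C'.tape C'.head)
        exact sup_bot_eq _
      · show (false || true) = decide (C'.head = C'.head)
        simp
      · show ((fun _ => false) ⊔ oneHot q')
            = fun q => decide (C'.head = C'.head) && decide (C'.state = q)
        funext q
        simp [Pi.sup_apply, oneHot, hstate]
    · simp only [Pi.sup_apply, singleBlock_apply, if_neg hj]
      have : encodeConfig C' j = nonHeadPat Q (C'.tape j) := encode_nonHead C' hj
      rw [this, sup_bot_eq]
  · intro hnone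
    have hfun : (fun i => blockOut δ i (encodeConfig C i)) =
        fun i => singleBlock i (nonHeadPat Q (C.tape i)) := by
      funext i
      by_cases hi : i = C.head
      · subst hi
        rw [encode_head, blockOut_head]
        unfold transLabel
        rw [hnone]
      · rw [encode_nonHead C hi, blockOut_nonHead]
    unfold tmUpdate
    rw [hfun, sup_singleBlock]
    funext j
    rfl
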